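/- arXiv:2507.13153 — 4 statements merged into one kernel-verified Lean document; each statement's English description precedes it below -/
import Mathlib

section
/- The assignment 𝒫 ↦ cave_𝒫(t_1,…,t_p) of the cave polynomial to a polymatroid is valuative: for any polymatroids 𝒫_1,…,𝒫_k on [p] with cage m and any integers a_1,…,a_k such that Σ_{i=1}^{k} a_i · 1_{B(𝒫_i)}(v) = 0 for all v ∈ ℝ^p, one has Σ_{i=1}^{k} a_i · cave_{𝒫_i}(t_1,…,t_p) = 0 in ℤ[t_1,…,t_p]. -/
open scoped BigOperators

attribute [local instance] Classical.propDecidable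

namespace CavePaper

variable {p : ℕ}

/-- `rk` is the rank function of a polymatroid on `[p]` with cage `m`:
normalized, monotone, submodular, and `rk {i} ≤ m i` for all `i`. -/
def IsPolymatroid (m : Fin p → ℕ) (rk : Finset (Fin p) → ℕ) : Prop :=
  rk ∅ = 0 ∧
    (∀ J₁ J₂ : Finset (Fin p), J₁ ⊆ J₂ → rk J₁ ≤ rk J₂) ∧
    (∀ J₁ J₂ : Finset (Fin p), rk (J₁ ∩ J₂) + rk (J₁ ∪ J₂) ≤ rk J₁ + rk J₂) ∧
    (∀ i : Fin p, rk {i} ≤ m i)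

/-- An integer point lies in the independence polytope `I(𝒫)`. -/
def inIndep (rk : Finset (Fin p) → ℕ) (v : Fin p → ℤ) : Prop :=
  (∀ i, 0 ≤ v i) ∧ ∀ J : Finset (Fin p), ∑ j ∈ J, v j ≤ (rk J : ℤ)

/-- An integer point lies in the base polytope `B(𝒫)`. -/
def inBase (rk : Finset (Fin p) → ℕ) (v : Fin p → ℤ) : Prop :=
  inIndep rk v ∧ ∑ i, v i = (rk Finset.univ : ℤ)

/-- The indicator function `1_𝒫` of the base polytope, at integer points. -/
noncomputable def baseInd (rk : Finset (Fin p) → ℕ) (v : Fin p → ℤ) : ℤ :=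
  if inBase rk v then 1 else 0

/-- `max_{i<j} 1_𝒫(n - e_i + e_j)`. -/
noncomputable def cmax (rk : Finset (Fin p) → ℕ) (n : Fin p → ℕ) (i : Fin p) : ℤ :=
  if ∃ j, i < j ∧ inBase rk
      (fun k => (n k : ℤ) - (if k = i then 1 else 0) + (if k = j then 1 else 0))
    then 1 else 0

/-- The cave polynomial of a polymatroid: the expansion of
`∑_{n ∈ ℕ^p, |n| = rk(𝒫)} 1_𝒫(n) ∏_{i=1}^{p-1} (1 - max_{i<j} 1_𝒫(n-e_i+e_j) tᵢ⁻¹) tⁿ`.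
Each factor `(1 - cᵢ tᵢ⁻¹) tᵢ^{nᵢ}` is written as `tᵢ^{nᵢ} - cᵢ tᵢ^{nᵢ-1}`, which is
legitimate since `cᵢ ≠ 0` forces `nᵢ ≥ 1`; the factor for the last index is `tᵢ^{nᵢ}`. -/
noncomputable def cavePoly (rk : Finset (Fin p) → ℕ) : MvPolynomial (Fin p) ℤ :=
  ∑ n ∈ Finset.Nat.antidiagonalTuple p (rk Finset.univ),
    MvPolynomial.C (baseInd rk (fun i => (n i : ℤ))) *
      ∏ i : Fin p,
        if (i : ℕ) < p - 1 then
          MvPolynomial.X i ^ (n i) -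
            MvPolynomial.C (cmax rk n i) * MvPolynomial.X i ^ (n i - 1)
        else MvPolynomial.X i ^ (n i)

/-- A set `S ⊆ ℤ^q` is M-convex: it is nonempty, finite, and satisfies the
symmetric exchange property. -/
def MConvex {q : ℕ} (S : Set (Fin q → ℤ)) : Prop :=
  S.Nonempty ∧ S.Finite ∧
    ∀ u ∈ S, ∀ v ∈ S, ∀ i, v i < u i →
      ∃ j, u j < v j ∧
        (fun k => u k - (if k = i then 1 else 0) + (if k = j then 1 else 0)) ∈ S

/-- The Möbius function `μ_𝒫 : ℤ^p → ℤ` of a polymatroid: `0` outside `I(𝒫)`,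
`1` on `B(𝒫)`, and `1 - ∑_{w ∈ (n + ℤ_{>0}^p) ∩ I(𝒫)} μ_𝒫(w)` on `I(𝒫) \ B(𝒫)`.
(Every integer point of `I(𝒫)` lies in the box `0 ≤ w i ≤ rk {i}`; the redundant
condition `∑ n < ∑ w` — automatic for `p ≥ 1` — ensures termination.) -/
noncomputable def mobius (rk : Finset (Fin p) → ℕ) (n : Fin p → ℤ) : ℤ :=
  if inIndep rk n then
    if inBase rk n then 1
    else
      1 - ∑ w ∈ ((Finset.Icc (fun _ => (0 : ℤ)) (fun i => (rk {i} : ℤ))).filter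
            (fun w => (∀ i, n i < w i) ∧ (∑ i, n i) < (∑ i, w i) ∧ inIndep rk w)).attach,
          mobius rk w.1
  else 0
termination_by ((rk Finset.univ : ℤ) - ∑ i, n i).toNat
decreasing_by
  have hm := w.2
  simp only [Finset.mem_filter] at hm
  have h2 : (∑ i, w.1 i) ≤ (rk Finset.univ : ℤ) := by
    simpa using hm.2.2.2.2 Finset.univ
  have _h1 : (∑ i, n i) < ∑ i, w.1 i := hm.2.2.1
  omega

/-- The base polytope `B(𝒫) ⊆ ℝ^p`. -/
def BaseSet (rk : Finset (Fin p) → ℕ) : Set (Fin p → ℝ) :=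
  {v | (∀ i, 0 ≤ v i) ∧ (∑ i, v i = (rk Finset.univ : ℝ)) ∧
    ∀ J : Finset (Fin p), ∑ j ∈ J, v j ≤ (rk J : ℝ)}

/-- The rank function `rk_S(J) = max_{u ∈ S} ∑_{j∈J} u_j` of a (finite, nonempty)
M-convex set `S ⊆ ℕ^p`. -/
noncomputable def rkOf (S : Set (Fin p → ℤ)) (J : Finset (Fin p)) : ℕ :=
  sSup ((fun u => (∑ j ∈ J, u j).toNat) '' S)

end CavePaper

/-!
Expanding the product, `cave_𝒫 = ∑_{n,T} (-1)^{|T|} c_𝒫(n,T) t^{n - e_T}`, where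
`c_𝒫(n,T) ∈ {0,1}` records whether `n` is a base and every `j ∈ T` can be exchanged upwards,
`n - e_j + e_{j'} ∈ B(𝒫)` for some `j' > j`. This holds exactly when `B(𝒫)` meets the polytope
`K(n,T) = conv {n + ∑_{i∈T} ε_i (e_{τ i} - e_i) : τ i > i}`, for weights `ε_i` that sum to less
than `1` and each exceed the sum of all smaller ones. So `c_𝒫(n,T)` is the Euler characteristic
of the compact convex set `B(𝒫) ∩ K(n,T)`, and since the Euler characteristic is a valuation,
every linear relation among the indicators of the `B(𝒫_i)` passes to the `c_{𝒫_i}(n,T)`.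
-/

open Finset

section EulerCharacteristic

variable {ι : Type*}

lemma eventually_add_mem_Icc_iff (t u v : ℝ) :
    ∀ᶠ δ in nhdsWithin 0 (Set.Ioi 0), (t + δ ∈ Set.Icc u v ↔ t ∈ Set.Ico u v) := by
  have hsmall : ∀ c : ℝ, ∀ᶠ δ in nhdsWithin 0 (Set.Ioi 0), t < c → t + δ < c := fun c => by
    by_cases htc : t < c
    · filter_upwards [nhdsWithin_le_nhds (eventually_lt_nhds (sub_pos.2 htc))] with δ hδ
      intro; linarith
    · exact Filter.Eventually.of_forall fun _ h => absurd h htc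
  filter_upwards [self_mem_nhdsWithin, hsmall u, hsmall v] with δ (hδ : 0 < δ) hu hv
  simp only [Set.mem_Icc, Set.mem_Ico]
  constructor
  · rintro ⟨h₁, h₂⟩
    exact ⟨not_lt.1 fun h => (hu h).not_ge h₁, not_le.1 fun h => by linarith⟩
  · rintro ⟨h₁, h₂⟩
    exact ⟨by linarith, (hv h₂).le⟩

/-- Comparing each point with the points just to its right detects `[u, v]` exactly at its right
endpoint. -/
lemma sum_mul_ite_le_eq_zero (s : Finset ι) (a : ι → ℤ) (u v : ι → ℝ)
    (h : ∀ t, ∑ i ∈ s, a i * (if t ∈ Set.Icc (u i) (v i) then 1 else 0) = 0) :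
    ∑ i ∈ s, a i * (if u i ≤ v i then 1 else 0) = 0 := by
  have hIco : ∀ t, ∑ i ∈ s, a i * (if t ∈ Set.Ico (u i) (v i) then 1 else 0) = 0 := by
    intro t
    obtain ⟨δ, hδ⟩ := ((s.eventually_all).2
      fun i _ => eventually_add_mem_Icc_iff t (u i) (v i)).exists
    exact (sum_congr rfl fun i hi => by simp only [hδ i hi]).trans (h (t + δ))
  have hendpoint : ∀ i ∈ s, ∑ t ∈ s.image v,
      ((if t ∈ Set.Icc (u i) (v i) then (1 : ℤ) else 0) -
        if t ∈ Set.Ico (u i) (v i) then 1 else 0) = if u i ≤ v i then 1 else 0 := by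
    intro i hi
    calc _ = ∑ t ∈ s.image v, if v i = t then (if u i ≤ v i then (1 : ℤ) else 0) else 0 := by
          refine sum_congr rfl fun t _ => ?_
          by_cases ht : v i = t
          · subst ht; by_cases huv : u i ≤ v i <;> simp [huv]
          · simp [lt_iff_le_and_ne, Ne.symm ht, ht]
      _ = _ := by rw [sum_ite_eq, if_pos (mem_image_of_mem v hi)]
  calc ∑ i ∈ s, a i * (if u i ≤ v i then 1 else 0)
      = ∑ t ∈ s.image v, (∑ i ∈ s, a i * (if t ∈ Set.Icc (u i) (v i) then 1 else 0) -
          ∑ i ∈ s, a i * (if t ∈ Set.Ico (u i) (v i) then 1 else 0)) := by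
        simp_rw [← sum_sub_distrib, ← mul_sub]
        rw [sum_comm]
        exact sum_congr rfl fun i hi => by rw [← mul_sum, hendpoint i hi]
    _ = 0 := by simp only [h, hIco, sub_zero, sum_const_zero]

lemma Convex.exists_eq_Icc {I : Set ℝ} (hconv : Convex ℝ I) (hcomp : IsCompact I) :
    ∃ u v : ℝ, I = Set.Icc u v := by
  rcases I.eq_empty_or_nonempty with rfl | hne
  · exact ⟨1, 0, (Set.Icc_eq_empty (by norm_num)).symm⟩
  · exact ⟨_, _, eq_Icc_of_connected_compact ⟨hne, hconv.isPreconnected⟩ hcomp⟩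

lemma sum_mul_ite_nonempty_eq_zero_of_real (s : Finset ι) (a : ι → ℤ) (I : ι → Set ℝ)
    (hconv : ∀ i, Convex ℝ (I i)) (hcomp : ∀ i, IsCompact (I i))
    (h : ∀ t, ∑ i ∈ s, a i * (if t ∈ I i then 1 else 0) = 0) :
    ∑ i ∈ s, a i * (if (I i).Nonempty then 1 else 0) = 0 := by
  choose u v huv using fun i => (hconv i).exists_eq_Icc (hcomp i)
  simp only [huv, Set.nonempty_Icc] at h ⊢
  exact sum_mul_ite_le_eq_zero s a u v h

lemma Convex.preimage_finCons {q : ℕ} {Q : Set (Fin (q + 1) → ℝ)} (hQ : Convex ℝ Q) (t : ℝ) :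
    Convex ℝ (Fin.cons t ⁻¹' Q) := by
  intro y hy z hz α β hα hβ hαβ
  have : (Fin.cons t (α • y + β • z) : Fin (q + 1) → ℝ) = α • Fin.cons t y + β • Fin.cons t z := by
    ext j
    refine Fin.cases ?_ (fun j => ?_) j <;> simp [← add_mul, hαβ]
  simpa [this] using hQ hy hz hα hβ hαβ

lemma IsCompact.preimage_finCons {q : ℕ} {Q : Set (Fin (q + 1) → ℝ)} (hQ : IsCompact Q) (t : ℝ) :
    IsCompact (Fin.cons t ⁻¹' Q) :=
  (hQ.image (continuous_pi fun j => continuous_apply j.succ)).of_isClosed_subset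
    (hQ.isClosed.preimage (continuous_const.finCons continuous_id))
    fun y hy => ⟨Fin.cons t y, hy, rfl⟩

lemma preimage_finCons_nonempty_iff {q : ℕ} {Q : Set (Fin (q + 1) → ℝ)} {t : ℝ} :
    (Fin.cons t ⁻¹' Q).Nonempty ↔ t ∈ (fun x => x 0) '' Q := by
  constructor
  · rintro ⟨y, hy⟩
    exact ⟨_, hy, rfl⟩
  · rintro ⟨x, hx, rfl⟩
    exact ⟨Fin.tail x, by rwa [Set.mem_preimage, Fin.cons_self_tail]⟩

/-- The slices along the first coordinate satisfy the same relation, and their nonemptiness is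
the indicator function of the projections, which are compact intervals. -/
theorem sum_mul_ite_nonempty_eq_zero {q : ℕ} (s : Finset ι) (a : ι → ℤ)
    (Q : ι → Set (Fin q → ℝ)) (hconv : ∀ i, Convex ℝ (Q i)) (hcomp : ∀ i, IsCompact (Q i))
    (h : ∀ x, ∑ i ∈ s, a i * (if x ∈ Q i then 1 else 0) = 0) :
    ∑ i ∈ s, a i * (if (Q i).Nonempty then 1 else 0) = 0 := by
  induction q with
  | zero =>
    have hpoint : ∀ i, (Q i).Nonempty ↔ 0 ∈ Q i := fun i =>
      ⟨fun ⟨x, hx⟩ => Subsingleton.elim x 0 ▸ hx, fun h => ⟨0, h⟩⟩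
    simpa only [hpoint] using h 0
  | succ q ih =>
    have hproj : ∀ t, ∑ i ∈ s, a i * (if t ∈ (fun x => x 0) '' Q i then 1 else 0) = 0 := by
      intro t
      simpa only [preimage_finCons_nonempty_iff] using
        ih (fun i => Fin.cons (α := fun _ => ℝ) t ⁻¹' Q i)
          (fun i => (hconv i).preimage_finCons t) (fun i => (hcomp i).preimage_finCons t)
          fun y => h (Fin.cons t y)
    simpa only [Set.image_nonempty] using sum_mul_ite_nonempty_eq_zero_of_real s a _
      (fun i => (hconv i).linear_image (LinearMap.proj 0))
      (fun i => (hcomp i).image (continuous_apply 0)) hproj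

end EulerCharacteristic

lemma Convex.add_sum_smul_sub_mem {E ι : Type*} [AddCommGroup E] [Module ℝ E] {C : Set E}
    (hC : Convex ℝ C) {x : E} (hx : x ∈ C) {S : Finset ι} {w : ι → ℝ} {y : ι → E}
    (hw : ∀ i ∈ S, 0 ≤ w i) (hw₁ : ∑ i ∈ S, w i ≤ 1) (hy : ∀ i ∈ S, y i ∈ C) :
    x + ∑ i ∈ S, w i • (y i - x) ∈ C := by
  have := hC.sum_mem (t := insertNone S) (w := fun o => o.elim (1 - ∑ i ∈ S, w i) w)
    (z := fun o => o.elim x y) (by simpa [Option.forall, hw₁] using hw) (by simp)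
    (by simpa [Option.forall, hx] using hy)
  convert this using 1
  simp [sum_insertNone, smul_sub, sub_smul, sum_sub_distrib, ← sum_smul]
  abel

lemma isLinearMap_sum_apply {ι : Type*} (J : Finset ι) :
    IsLinearMap ℝ (fun x : ι → ℝ => ∑ j ∈ J, x j) :=
  ⟨fun _ _ => sum_add_distrib, fun _ _ => (mul_sum _ _ _).symm⟩

lemma sum_mem_of_mem_convexHull {ι : Type*} {s : Set (ι → ℝ)} {J : Finset ι} {I : Set ℝ}
    (hI : Convex ℝ I) (h : ∀ y ∈ s, ∑ j ∈ J, y j ∈ I) {x : ι → ℝ}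
    (hx : x ∈ convexHull ℝ s) : ∑ j ∈ J, x j ∈ I :=
  convexHull_min h (hI.is_linear_preimage (isLinearMap_sum_apply J)) hx

lemma sum_two_pow_lt {p c : ℕ} {T : Finset (Fin p)} (hT : ∀ i ∈ T, (i : ℕ) < c) :
    ∑ i ∈ T, (2 : ℝ) ^ (i : ℕ) < 2 ^ c := by
  have := Nat.geomSum_lt le_rfl (s := T.map Fin.valEmbedding) (by simpa using hT)
  rw [sum_map] at this
  exact_mod_cast this

namespace CavePaper

variable {p : ℕ}

def exchange (v : Fin p → ℤ) (i j : Fin p) : Fin p → ℤ :=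
  fun k => v k - (if k = i then 1 else 0) + (if k = j then 1 else 0)

lemma sum_exchange (v : Fin p → ℤ) (i j : Fin p) (J : Finset (Fin p)) :
    ∑ k ∈ J, exchange v i j k =
      ∑ k ∈ J, v k - (if i ∈ J then 1 else 0) + (if j ∈ J then 1 else 0) := by
  simp only [exchange, sum_add_distrib, sum_sub_distrib, sum_ite_eq']

def IsTight (rk : Finset (Fin p) → ℕ) (v : Fin p → ℤ) (J : Finset (Fin p)) : Prop :=
  ∑ k ∈ J, v k = rk J

section Tight

variable {m : Fin p → ℕ} {rk : Finset (Fin p) → ℕ} {v : Fin p → ℤ}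

lemma IsTight.union (hrk : IsPolymatroid m rk) (hv : ∀ J, ∑ k ∈ J, v k ≤ rk J)
    {J₁ J₂ : Finset (Fin p)} (h₁ : IsTight rk v J₁) (h₂ : IsTight rk v J₂) :
    IsTight rk v (J₁ ∪ J₂) := by
  have hsub : (rk (J₁ ∩ J₂) : ℤ) + rk (J₁ ∪ J₂) ≤ rk J₁ + rk J₂ := by
    exact_mod_cast hrk.2.2.1 J₁ J₂
  have hmod := sum_union_inter (s₁ := J₁) (s₂ := J₂) (f := v)
  have hunion := hv (J₁ ∪ J₂)
  have hinter := hv (J₁ ∩ J₂)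
  unfold IsTight at *
  omega

lemma exists_isTight_superset (hrk : IsPolymatroid m rk) (hv : ∀ J, ∑ k ∈ J, v k ≤ rk J)
    {i : Fin p} (T : Finset (Fin p)) (hT : ∀ j ∈ T, ∃ J, j ∈ J ∧ i ∉ J ∧ IsTight rk v J) :
    ∃ J, T ⊆ J ∧ i ∉ J ∧ IsTight rk v J := by
  induction T using Finset.induction_on with
  | empty => exact ⟨∅, subset_rfl, notMem_empty i, by simp [IsTight, hrk.1]⟩
  | insert j T _ ih =>
    obtain ⟨J₁, hj, hi₁, ht₁⟩ := hT j (mem_insert_self j T)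
    obtain ⟨J₂, hT₂, hi₂, ht₂⟩ := ih fun j' hj' => hT j' (mem_insert_of_mem hj')
    exact ⟨J₁ ∪ J₂, insert_subset (mem_union_left _ hj) (hT₂.trans subset_union_right),
      by simp [hi₁, hi₂], ht₁.union hrk hv ht₂⟩

lemma exists_isTight_of_not_inBase_exchange (hv : inBase rk v) {i j : Fin p} (hij : i ≠ j)
    (hvi : 1 ≤ v i) (hnot : ¬ inBase rk (exchange v i j)) :
    ∃ J, j ∈ J ∧ i ∉ J ∧ IsTight rk v J := by
  by_contra! hJ
  refine hnot ⟨⟨fun k => ?_, fun J => ?_⟩, ?_⟩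
  · have := hv.1.1 k
    by_cases hki : k = i
    · subst hki
      simp only [exchange, if_pos, if_neg hij]
      omega
    · simp only [exchange, if_neg hki]
      split_ifs <;> omega
  · have hle := hv.1.2 J
    rw [sum_exchange]
    by_cases hj : j ∈ J
    · by_cases hi : i ∈ J
      · simpa [hi, hj] using hle
      · have := hJ J hj hi
        simp only [IsTight, if_neg hi, if_pos hj] at this ⊢
        omega
    · split_ifs <;> omega
  · rw [sum_exchange, hv.2]
    simp

end Tight

lemma BaseSet_eq (rk : Finset (Fin p) → ℕ) : BaseSet rk =
    (⋂ i, {x : Fin p → ℝ | 0 ≤ x i}) ∩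
      ({x | ∑ i, x i = (rk univ : ℝ)} ∩ ⋂ J, {x | ∑ j ∈ J, x j ≤ (rk J : ℝ)}) := by
  ext x
  simp [BaseSet]

lemma convex_BaseSet (rk : Finset (Fin p) → ℕ) : Convex ℝ (BaseSet rk) := by
  rw [BaseSet_eq]
  exact (convex_iInter fun i => convex_halfSpace_ge (LinearMap.proj i).isLinear 0).inter
    ((convex_hyperplane (isLinearMap_sum_apply _) _).inter
      (convex_iInter fun J => convex_halfSpace_le (isLinearMap_sum_apply J) _))

lemma isClosed_BaseSet (rk : Finset (Fin p) → ℕ) : IsClosed (BaseSet rk) := by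
  have hsum (J : Finset (Fin p)) : Continuous fun x : Fin p → ℝ => ∑ j ∈ J, x j :=
    continuous_finsetSum _ fun j _ => continuous_apply j
  rw [BaseSet_eq]
  exact (isClosed_iInter fun i => isClosed_le continuous_const (continuous_apply i)).inter
    ((isClosed_eq (hsum _) continuous_const).inter
      (isClosed_iInter fun J => isClosed_le (hsum J) continuous_const))

lemma cast_mem_BaseSet {rk : Finset (Fin p) → ℕ} {v : Fin p → ℤ} (hv : inBase rk v) :
    (fun k => (v k : ℝ)) ∈ BaseSet rk :=
  ⟨fun i => by dsimp only; exact_mod_cast hv.1.1 i, by dsimp only; exact_mod_cast hv.2,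
    fun J => by dsimp only; exact_mod_cast hv.1.2 J⟩

noncomputable def eps (p : ℕ) (i : Fin p) : ℝ := 2 ^ (i : ℕ) / 2 ^ p

lemma eps_pos (i : Fin p) : 0 < eps p i := by
  unfold eps; positivity

lemma sum_eps_lt_one (S : Finset (Fin p)) : ∑ i ∈ S, eps p i < 1 := by
  simp only [eps, ← sum_div]
  rw [div_lt_one (by positivity)]
  exact sum_two_pow_lt fun i _ => i.2

lemma sum_eps_lt_eps (S : Finset (Fin p)) (i₀ : Fin p) :
    ∑ i ∈ S with i < i₀, eps p i < eps p i₀ := by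
  simp only [eps, ← sum_div]
  exact div_lt_div_of_pos_right (sum_two_pow_lt fun i hi => (mem_filter.1 hi).2) (by positivity)

noncomputable def vertex (v : Fin p → ℤ) (S : Finset (Fin p)) (τ : Fin p → Fin p) :
    Fin p → ℝ :=
  (fun k => (v k : ℝ)) +
    ∑ i ∈ S, eps p i • ((fun k => (exchange v i (τ i) k : ℝ)) - fun k => (v k : ℝ))

noncomputable def cell (v : Fin p → ℤ) (S : Finset (Fin p)) : Set (Fin p → ℝ) :=
  convexHull ℝ (vertex v S '' {τ | ∀ i ∈ S, i < τ i})

lemma convex_cell (v : Fin p → ℤ) (S : Finset (Fin p)) : Convex ℝ (cell v S) :=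
  convex_convexHull ℝ _

lemma isCompact_cell (v : Fin p → ℤ) (S : Finset (Fin p)) : IsCompact (cell v S) :=
  (Set.toFinite _).isCompact_convexHull ℝ

lemma sum_vertex (v : Fin p → ℤ) (S : Finset (Fin p)) (τ : Fin p → Fin p) (J : Finset (Fin p)) :
    ∑ k ∈ J, vertex v S τ k = ∑ k ∈ J, (v k : ℝ) +
      ∑ i ∈ S, eps p i * ((if τ i ∈ J then 1 else 0) - if i ∈ J then 1 else 0) := by
  simp only [vertex, Pi.add_apply, Finset.sum_apply, Pi.smul_apply, Pi.sub_apply, smul_eq_mul,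
    sum_add_distrib]
  rw [sum_comm]
  congr 1
  refine sum_congr rfl fun i _ => ?_
  rw [← mul_sum, sum_sub_distrib, ← Int.cast_sum, sum_exchange]
  push_cast
  ring

lemma abs_sum_vertex_sub_lt_one (v : Fin p → ℤ) (S : Finset (Fin p)) (τ : Fin p → Fin p)
    (J : Finset (Fin p)) : |∑ k ∈ J, vertex v S τ k - ∑ k ∈ J, (v k : ℝ)| < 1 := by
  rw [sum_vertex, add_sub_cancel_left]
  refine ((abs_sum_le_sum_abs _ _).trans (sum_le_sum fun i _ => ?_)).trans_lt (sum_eps_lt_one S)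
  rw [abs_mul, abs_of_pos (eps_pos i)]
  refine mul_le_of_le_one_right (eps_pos i).le ?_
  split_ifs <;> norm_num

lemma sum_univ_vertex (v : Fin p → ℤ) (S : Finset (Fin p)) (τ : Fin p → Fin p) :
    ∑ k, vertex v S τ k = ∑ k, (v k : ℝ) := by
  simp [sum_vertex]

/-- The indices `i > i₀` contribute nothing, `i₀` contributes `ε_{i₀}`, and the smaller indices
cannot cancel it. -/
lemma sum_lt_sum_vertex (v : Fin p → ℤ) {S : Finset (Fin p)} {τ : Fin p → Fin p}
    (hτ : ∀ i ∈ S, i < τ i) {i₀ : Fin p} (hi₀ : i₀ ∈ S) {J : Finset (Fin p)} (hi₀J : i₀ ∉ J)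
    (hJ : ∀ j, i₀ < j → j ∈ J) : ∑ k ∈ J, (v k : ℝ) < ∑ k ∈ J, vertex v S τ k := by
  rw [sum_vertex, lt_add_iff_pos_right]
  calc 0 < eps p i₀ - ∑ i ∈ S with i < i₀, eps p i := sub_pos.2 (sum_eps_lt_eps S i₀)
    _ = ∑ i ∈ S, ((if i₀ = i then eps p i else 0) - if i < i₀ then eps p i else 0) := by
      rw [sum_sub_distrib, sum_ite_eq, if_pos hi₀, sum_filter]
    _ ≤ _ := sum_le_sum fun i hi => ?_
  have hε := eps_pos i
  rcases lt_trichotomy i i₀ with h | rfl | h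
  · simp only [if_neg h.ne', if_pos h]
    split_ifs <;> linarith
  · simp [hJ _ (hτ _ hi), hi₀J]
  · simp [h.ne, h.not_gt, hJ _ h, hJ _ (h.trans (hτ _ hi))]

lemma vertex_mem_BaseSet {rk : Finset (Fin p) → ℕ} {v : Fin p → ℤ} (hv : inBase rk v)
    {S : Finset (Fin p)} {τ : Fin p → Fin p} (hτ : ∀ i ∈ S, inBase rk (exchange v i (τ i))) :
    vertex v S τ ∈ BaseSet rk :=
  (convex_BaseSet rk).add_sum_smul_sub_mem (cast_mem_BaseSet hv) (fun i _ => (eps_pos i).le)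
    (sum_eps_lt_one S).le fun i hi => cast_mem_BaseSet (hτ i hi)

section MemCell

variable {v : Fin p → ℤ} {S : Finset (Fin p)} {x : Fin p → ℝ}

lemma abs_sum_sub_lt_one_of_mem_cell (hx : x ∈ cell v S) (J : Finset (Fin p)) :
    |∑ k ∈ J, x k - ∑ k ∈ J, (v k : ℝ)| < 1 := by
  have := sum_mem_of_mem_convexHull (J := J) (convex_ball (∑ k ∈ J, (v k : ℝ)) 1) ?_ hx
  · rwa [Metric.mem_ball, Real.dist_eq] at this
  · rintro _ ⟨τ, -, rfl⟩
    rw [Metric.mem_ball, Real.dist_eq]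
    exact abs_sum_vertex_sub_lt_one v S τ J

lemma sum_univ_of_mem_cell (hx : x ∈ cell v S) : ∑ k, x k = ∑ k, (v k : ℝ) :=
  sum_mem_of_mem_convexHull (convex_singleton _)
    (by rintro _ ⟨τ, -, rfl⟩; exact sum_univ_vertex v S τ) hx

lemma sum_lt_sum_of_mem_cell (hx : x ∈ cell v S) {i₀ : Fin p} (hi₀ : i₀ ∈ S)
    {J : Finset (Fin p)} (hi₀J : i₀ ∉ J) (hJ : ∀ j, i₀ < j → j ∈ J) :
    ∑ k ∈ J, (v k : ℝ) < ∑ k ∈ J, x k :=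
  sum_mem_of_mem_convexHull (convex_Ioi _)
    (by rintro _ ⟨τ, hτ, rfl⟩; exact sum_lt_sum_vertex v hτ hi₀ hi₀J hJ) hx

lemma inBase_of_mem_BaseSet_of_mem_cell {rk : Finset (Fin p) → ℕ} (hxB : x ∈ BaseSet rk)
    (hxK : x ∈ cell v S) : inBase rk v := by
  refine ⟨⟨fun k => ?_, fun J => ?_⟩, ?_⟩
  · have h₁ := abs_sum_sub_lt_one_of_mem_cell hxK {k}
    have h₂ := hxB.1 k
    simp only [sum_singleton, abs_lt] at h₁
    have : (-1 : ℤ) < v k := by exact_mod_cast (by linarith : (-1 : ℝ) < v k)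
    omega
  · have h₁ := abs_sum_sub_lt_one_of_mem_cell hxK J
    have h₂ := hxB.2.2 J
    rw [abs_lt] at h₁
    have : ∑ j ∈ J, v j < rk J + 1 := by
      exact_mod_cast (by linarith : ∑ j ∈ J, (v j : ℝ) < rk J + 1)
    omega
  · exact_mod_cast (sum_univ_of_mem_cell hxK).symm.trans hxB.2.1

lemma one_le_of_mem_cell (hxK : x ∈ cell v S) {i₀ : Fin p} (hi₀ : i₀ ∈ S) (hx : 0 ≤ x i₀) :
    1 ≤ v i₀ := by
  have h₁ := sum_lt_sum_of_mem_cell hxK hi₀ (notMem_erase i₀ univ)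
    fun j hj => mem_erase.2 ⟨hj.ne', mem_univ j⟩
  have h₂ := sum_univ_of_mem_cell hxK
  rw [← add_sum_erase univ _ (mem_univ i₀), ← add_sum_erase univ _ (mem_univ i₀)] at h₂
  have : (0 : ℤ) < v i₀ := by exact_mod_cast (by linarith : (0 : ℝ) < v i₀)
  omega

end MemCell

/-- The vertices of `K(v, S)` are convex combinations of `v` and its exchanges. Conversely, an
index `i₀ ∈ S` that cannot be exchanged upwards yields a tight set containing all larger indices
but not `i₀`, on which the points of `K(v, S)` exceed `v`. -/
theorem inBase_and_exchange_iff {m : Fin p → ℕ} {rk : Finset (Fin p) → ℕ}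
    (hrk : IsPolymatroid m rk) (v : Fin p → ℤ) (S : Finset (Fin p)) :
    (inBase rk v ∧ ∀ i ∈ S, ∃ j, i < j ∧ inBase rk (exchange v i j)) ↔
      (BaseSet rk ∩ cell v S).Nonempty := by
  constructor
  · rintro ⟨hv, hS⟩
    choose! τ hτ using hS
    exact ⟨vertex v S τ, vertex_mem_BaseSet hv fun i hi => (hτ i hi).2,
      subset_convexHull ℝ _ ⟨τ, fun i hi => (hτ i hi).1, rfl⟩⟩
  · rintro ⟨x, hxB, hxK⟩
    have hv := inBase_of_mem_BaseSet_of_mem_cell hxB hxK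
    refine ⟨hv, fun i₀ hi₀ => ?_⟩
    by_contra! hno
    have hvi₀ := one_le_of_mem_cell hxK hi₀ (hxB.1 i₀)
    obtain ⟨J, hJ, hi₀J, htight⟩ := exists_isTight_superset hrk hv.1.2 {j | i₀ < j}
      fun j hj => exists_isTight_of_not_inBase_exchange hv (mem_filter.1 hj).2.ne hvi₀
        (hno j (mem_filter.1 hj).2)
    have h₁ := sum_lt_sum_of_mem_cell hxK hi₀ hi₀J fun j hj => hJ (mem_filter.2 ⟨mem_univ j, hj⟩)
    have h₂ : ∑ k ∈ J, (v k : ℝ) = rk J := by exact_mod_cast htight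
    linarith [hxB.2.2 J]

section Coefficients

open MvPolynomial

noncomputable def caveCoeff (rk : Finset (Fin p) → ℕ) (n : Fin p → ℕ) (T : Finset (Fin p)) : ℤ :=
  baseInd rk (fun i => (n i : ℤ)) * ∏ j ∈ T, cmax rk n j

noncomputable def caveMonomial (n : Fin p → ℕ) (T : Finset (Fin p)) : MvPolynomial (Fin p) ℤ :=
  (∏ j ∈ T, X j ^ (n j - 1)) * ∏ j ∈ univ \ T, X j ^ n j

lemma caveCoeff_eq {m : Fin p → ℕ} {rk : Finset (Fin p) → ℕ} (hrk : IsPolymatroid m rk)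
    (n : Fin p → ℕ) (T : Finset (Fin p)) :
    caveCoeff rk n T = if (BaseSet rk ∩ cell (fun i => (n i : ℤ)) T).Nonempty then 1 else 0 := by
  have hcmax (j : Fin p) : cmax rk n j =
      if ∃ j', j < j' ∧ inBase rk (exchange (fun i => (n i : ℤ)) j j') then 1 else 0 := rfl
  rw [caveCoeff, baseInd, prod_congr rfl fun j _ => hcmax j, prod_boole, ite_zero_mul_ite_zero,
    mul_one]
  simp only [inBase_and_exchange_iff hrk]

lemma cmax_eq_zero_of_not_lt {rk : Finset (Fin p) → ℕ} (n : Fin p → ℕ) {i : Fin p}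
    (hi : ¬ (i : ℕ) < p - 1) : cmax rk n i = 0 :=
  if_neg fun ⟨j, hij, _⟩ => hi (by have := j.2; have : (i : ℕ) < j := hij; omega)

lemma cavePoly_eq_sum {rk : Finset (Fin p) → ℕ} {D : Finset (Fin p → ℕ)}
    (hD : Nat.antidiagonalTuple p (rk univ) ⊆ D) :
    cavePoly rk = ∑ n ∈ D, ∑ T ∈ univ.powerset,
      C ((-1) ^ #T * caveCoeff rk n T) * caveMonomial n T := by
  rw [cavePoly, sum_subset hD]
  · refine sum_congr rfl fun n _ => ?_
    have hfactor (i : Fin p) :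
        (if (i : ℕ) < p - 1 then X i ^ n i - C (cmax rk n i) * X i ^ (n i - 1) else X i ^ n i) =
          -(C (cmax rk n i) * X i ^ (n i - 1)) + X i ^ n i := by
      split_ifs with hi
      · ring
      · simp [cmax_eq_zero_of_not_lt n hi]
    rw [prod_congr rfl fun i _ => hfactor i, prod_add, mul_sum]
    refine sum_congr rfl fun T _ => ?_
    rw [prod_neg, prod_mul_distrib, ← map_prod, caveMonomial, caveCoeff]
    simp only [map_mul, map_pow, map_neg, map_one]
    ring
  · intro n _ hn
    have : ¬ inBase rk (fun i => (n i : ℤ)) := fun h =>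
      hn (Nat.mem_antidiagonalTuple.2 (by have := h.2; dsimp only at this; exact_mod_cast this))
    simp [baseInd, this]

variable {ι : Type*} [Fintype ι] {P : ι → Finset (Fin p) → ℕ} (a : ι → ℤ)

lemma sum_smul_cavePoly {D : Finset (Fin p → ℕ)}
    (hD : ∀ i, Nat.antidiagonalTuple p (P i univ) ⊆ D) :
    ∑ i, a i • cavePoly (P i) = ∑ n ∈ D, ∑ T ∈ univ.powerset,
      C ((-1) ^ #T * ∑ i, a i * caveCoeff (P i) n T) * caveMonomial n T := by
  simp only [cavePoly_eq_sum (hD _), smul_sum, mul_sum, map_sum, sum_mul]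
  rw [sum_comm]
  refine sum_congr rfl fun n _ => ?_
  rw [sum_comm]
  refine sum_congr rfl fun T _ => sum_congr rfl fun i _ => ?_
  rw [smul_eq_C_mul, map_mul, map_mul, map_mul]
  ring

lemma sum_mul_caveCoeff_eq_zero {m : Fin p → ℕ} (hP : ∀ i, IsPolymatroid m (P i))
    (hval : ∀ x : Fin p → ℝ, ∑ i, a i * (if x ∈ BaseSet (P i) then (1 : ℤ) else 0) = 0)
    (n : Fin p → ℕ) (T : Finset (Fin p)) :
    ∑ i, a i * caveCoeff (P i) n T = 0 := by
  simp only [caveCoeff_eq (hP _)]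
  refine sum_mul_ite_nonempty_eq_zero univ a _
    (fun i => (convex_BaseSet _).inter (convex_cell _ T))
    (fun i => (isCompact_cell _ T).inter_left (isClosed_BaseSet _)) fun x => ?_
  by_cases hx : x ∈ cell (fun i => (n i : ℤ)) T
  · simpa [hx] using hval x
  · simp [hx]

end Coefficients

theorem cave_valuative_general
    (p : ℕ) (m : Fin p → ℕ) (k : ℕ)
    (P : Fin k → Finset (Fin p) → ℕ) (hP : ∀ i, IsPolymatroid m (P i))
    (a : Fin k → ℤ)
    (hval : ∀ v : Fin p → ℝ,
      (∑ i, a i * (if v ∈ BaseSet (P i) then (1 : ℤ) else 0)) = 0) :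
    (∑ i, a i • cavePoly (P i)) = 0 := by
  rw [sum_smul_cavePoly a fun i =>
    subset_biUnion_of_mem (fun i => Nat.antidiagonalTuple p (P i univ)) (mem_univ i)]
  simp [sum_mul_caveCoeff_eq_zero a hP hval]

/-- The assignment `𝒫 ↦ cave_𝒫` is valuative: if a `ℤ`-linear
combination of indicator functions of base polytopes of polymatroids (with a common
cage `m`) vanishes identically on `ℝ^p`, then the same linear combination of cave
polynomials vanishes in `ℤ[t_1, …, t_p]`. -/
theorem cave_valuative
    (p : ℕ) (hp : 1 ≤ p) (m : Fin p → ℕ) (k : ℕ)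
    (P : Fin k → Finset (Fin p) → ℕ) (hP : ∀ i, IsPolymatroid m (P i))
    (a : Fin k → ℤ)
    (hval : ∀ v : Fin p → ℝ,
      (∑ i, a i * (if v ∈ BaseSet (P i) then (1 : ℤ) else 0)) = 0) :
    (∑ i, a i • cavePoly (P i)) = 0 :=
  cave_valuative_general p m k P hP a hval

end CavePaper
end

section
/- Let 𝒫 be a polymatroid on [p] with cage m ∈ ℕ^p, let i ∈ [p], and suppose the truncation 𝒫_{e_i} = {n ∈ B(𝒫)∩ℕ^p : n_i ≥ 1} is nonempty, so 𝒫_{e_i} is a polymatroid (M-convex set). Then for every n ∈ ℕ^p with n ≥ e_i one has μ_{𝒫_{e_i}}(n) = μ_𝒫(n). -/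
open scoped BigOperators

attribute [local instance] Classical.propDecidable

namespace CavePaper

variable {p : ℕ}

lemma tight_union {m : Fin p → ℕ} {rk : Finset (Fin p) → ℕ} (hP : IsPolymatroid m rk)
    {w : Fin p → ℤ} (hw : inIndep rk w) {J₁ J₂ : Finset (Fin p)}
    (h1 : ∑ j ∈ J₁, w j = (rk J₁ : ℤ)) (h2 : ∑ j ∈ J₂, w j = (rk J₂ : ℤ)) :
    ∑ j ∈ J₁ ∪ J₂, w j = (rk (J₁ ∪ J₂) : ℤ) := by
  have hsub := hP.2.2.1 J₁ J₂
  have hui : ∑ j ∈ J₁ ∪ J₂, w j + ∑ j ∈ J₁ ∩ J₂, w j = ∑ j ∈ J₁, w j + ∑ j ∈ J₂, w j :=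
    Finset.sum_union_inter
  have hle1 := hw.2 (J₁ ∪ J₂)
  have hle2 := hw.2 (J₁ ∩ J₂)
  have hsub' : (rk (J₁ ∩ J₂) : ℤ) + (rk (J₁ ∪ J₂) : ℤ) ≤ (rk J₁ : ℤ) + (rk J₂ : ℤ) := by
    exact_mod_cast hsub
  linarith

lemma biUnion_tight {m : Fin p → ℕ} {rk : Finset (Fin p) → ℕ} (hP : IsPolymatroid m rk)
    {w : Fin p → ℤ} (hw : inIndep rk w) :
    ∀ 𝒥 : Finset (Finset (Fin p)), (∀ J ∈ 𝒥, ∑ j ∈ J, w j = (rk J : ℤ)) →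
      ∑ j ∈ 𝒥.biUnion id, w j = (rk (𝒥.biUnion id) : ℤ) := by
  intro 𝒥
  induction 𝒥 using Finset.induction_on with
  | empty => intro _; simp [hP.1]
  | @insert J 𝒥 hJ ih =>
    intro h
    rw [Finset.biUnion_insert]
    exact tight_union hP hw (h _ (Finset.mem_insert_self _ _))
      (ih fun K hK => h K (Finset.mem_insert_of_mem hK))

lemma exists_base_ge {m : Fin p → ℕ} {rk : Finset (Fin p) → ℕ} (hP : IsPolymatroid m rk) :
    ∀ (N : ℕ) (w : Fin p → ℤ), inIndep rk w →
      ((rk Finset.univ : ℤ) - ∑ k, w k).toNat ≤ N →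
      ∃ v, inBase rk v ∧ ∀ k, w k ≤ v k := by
  intro N
  induction N with
  | zero =>
    intro w hw h
    have hle := hw.2 Finset.univ
    have heq : ∑ k, w k = (rk Finset.univ : ℤ) := by omega
    exact ⟨w, ⟨hw, heq⟩, fun k => le_refl _⟩
  | succ N ih =>
    intro w hw h
    by_cases hB : ∑ k, w k = (rk Finset.univ : ℤ)
    · exact ⟨w, ⟨hw, hB⟩, fun k => le_refl _⟩
    · have hlt : ∑ k, w k < (rk Finset.univ : ℤ) := lt_of_le_of_ne (hw.2 _) hB
      set T := ((Finset.univ : Finset (Finset (Fin p))).filter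
        (fun J => ∑ j ∈ J, w j = (rk J : ℤ))).biUnion id with hTdef
      have hT : ∑ j ∈ T, w j = (rk T : ℤ) :=
        biUnion_tight hP hw _ (fun J hJ => (Finset.mem_filter.mp hJ).2)
      have hTne : T ≠ Finset.univ := by
        intro he; rw [he] at hT; omega
      obtain ⟨k, hk⟩ : ∃ k, k ∉ T := by
        by_contra hc; push_neg at hc
        exact hTne (Finset.eq_univ_iff_forall.mpr hc)
      set w' := fun j => w j + (if j = k then (1:ℤ) else 0) with hw'def
      have hsum : ∀ J : Finset (Fin p),
          ∑ j ∈ J, w' j = ∑ j ∈ J, w j + (if k ∈ J then 1 else 0) := by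
        intro J
        simp only [hw'def, Finset.sum_add_distrib, Finset.sum_ite_eq', Finset.sum_const_zero]
      have hw' : inIndep rk w' := by
        constructor
        · intro j; have := hw.1 j; simp only [hw'def]; split <;> omega
        · intro J
          rw [hsum J]
          by_cases hkJ : k ∈ J
          · have hJt : ∑ j ∈ J, w j < (rk J : ℤ) := by
              rcases lt_or_eq_of_le (hw.2 J) with hlt' | heq'
              · exact hlt'
              · exfalso
                exact hk (Finset.mem_biUnion.mpr
                  ⟨J, Finset.mem_filter.mpr ⟨Finset.mem_univ _, heq'⟩, hkJ⟩)
            rw [if_pos hkJ]; omega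
          · rw [if_neg hkJ]; simpa using hw.2 J
      obtain ⟨v, hv, hge⟩ := ih w' hw' (by
        rw [hsum]
        rw [if_pos (Finset.mem_univ k)]
        omega)
      exact ⟨v, hv, fun j => le_trans (by simp only [hw'def]; split <;> omega) (hge j)⟩

lemma rkOf_le {rk : Finset (Fin p) → ℕ} {S : Set (Fin p → ℤ)} (hne : S.Nonempty)
    (hS : ∀ v ∈ S, inIndep rk v) (J : Finset (Fin p)) : rkOf S J ≤ rk J := by
  refine csSup_le (hne.image _) ?_
  rintro x ⟨v, hv, rfl⟩
  show (∑ j ∈ J, v j).toNat ≤ rk J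
  have := (hS v hv).2 J
  omega

lemma le_rkOf {rk : Finset (Fin p) → ℕ} {S : Set (Fin p → ℤ)}
    (hS : ∀ v ∈ S, inIndep rk v) {v : Fin p → ℤ} (hv : v ∈ S) (J : Finset (Fin p)) :
    ∑ j ∈ J, v j ≤ (rkOf S J : ℤ) := by
  have hb : BddAbove ((fun u => (∑ j ∈ J, u j).toNat) '' S) := by
    refine ⟨rk J, ?_⟩
    rintro x ⟨u, hu, rfl⟩
    show (∑ j ∈ J, u j).toNat ≤ rk J
    have := (hS u hu).2 J
    omega
  have hmem : (∑ j ∈ J, v j).toNat ∈ ((fun u => (∑ j ∈ J, u j).toNat) '' S) := ⟨v, hv, rfl⟩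
  have h1 : (∑ j ∈ J, v j).toNat ≤ rkOf S J := le_csSup hb hmem
  have hnn : 0 ≤ ∑ j ∈ J, v j := Finset.sum_nonneg (fun j _ => (hS v hv).1 j)
  omega

lemma rkOf_univ_eq {rk : Finset (Fin p) → ℕ} {S : Set (Fin p → ℤ)} (hne : S.Nonempty)
    (hS : ∀ v ∈ S, inBase rk v) : rkOf S Finset.univ = rk Finset.univ := by
  obtain ⟨v, hv⟩ := id hne
  have hS' : ∀ v ∈ S, inIndep rk v := fun v hv => (hS v hv).1
  refine le_antisymm (rkOf_le hne hS' _) ?_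
  have h := le_rkOf hS' hv Finset.univ
  rw [(hS v hv).2] at h
  exact_mod_cast h

lemma indep_iff {m : Fin p → ℕ} {rk : Finset (Fin p) → ℕ} (hP : IsPolymatroid m rk)
    {i : Fin p} (hne : {v : Fin p → ℤ | inBase rk v ∧ 1 ≤ v i}.Nonempty)
    {w : Fin p → ℤ} (hwi : 1 ≤ w i) :
    inIndep (rkOf {v : Fin p → ℤ | inBase rk v ∧ 1 ≤ v i}) w ↔ inIndep rk w := by
  set S := {v : Fin p → ℤ | inBase rk v ∧ 1 ≤ v i} with hSdef
  have hS : ∀ v ∈ S, inIndep rk v := fun v hv => hv.1.1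
  constructor
  · intro h
    refine ⟨h.1, fun J => le_trans (h.2 J) ?_⟩
    exact_mod_cast rkOf_le hne hS J
  · intro h
    obtain ⟨v, hvB, hvge⟩ := exists_base_ge hP ((rk Finset.univ : ℤ) - ∑ k, w k).toNat w h
      (le_refl _)
    have hvS : v ∈ S := ⟨hvB, le_trans hwi (hvge i)⟩
    refine ⟨h.1, fun J => ?_⟩
    exact le_trans (Finset.sum_le_sum (fun j _ => hvge j)) (le_rkOf hS hvS J)

lemma base_iff {m : Fin p → ℕ} {rk : Finset (Fin p) → ℕ} (hP : IsPolymatroid m rk)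
    {i : Fin p} (hne : {v : Fin p → ℤ | inBase rk v ∧ 1 ≤ v i}.Nonempty)
    {w : Fin p → ℤ} (hwi : 1 ≤ w i) :
    inBase (rkOf {v : Fin p → ℤ | inBase rk v ∧ 1 ≤ v i}) w ↔ inBase rk w := by
  have huniv : rkOf {v : Fin p → ℤ | inBase rk v ∧ 1 ≤ v i} Finset.univ = rk Finset.univ :=
    rkOf_univ_eq hne (fun v hv => hv.1)
  constructor
  · rintro ⟨h1, h2⟩
    rw [huniv] at h2
    exact ⟨(indep_iff hP hne hwi).mp h1, h2⟩
  · rintro ⟨h1, h2⟩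
    exact ⟨(indep_iff hP hne hwi).mpr h1, by rw [huniv]; exact h2⟩

lemma mobius_mem_filter_iff {rk : Finset (Fin p) → ℕ} (n w : Fin p → ℤ) :
    w ∈ (Finset.Icc (fun _ => (0 : ℤ)) (fun j => (rk {j} : ℤ))).filter
        (fun w => (∀ k, n k < w k) ∧ (∑ k, n k) < (∑ k, w k) ∧ inIndep rk w) ↔
      (∀ k, n k < w k) ∧ (∑ k, n k) < (∑ k, w k) ∧ inIndep rk w := by
  rw [Finset.mem_filter]
  constructor
  · exact And.right
  · intro h
    refine ⟨Finset.mem_Icc.mpr ⟨fun j => h.2.2.1 j, fun j => ?_⟩, h⟩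
    have := h.2.2.2 {j}
    simpa using this

lemma mobius_eq_aux {m : Fin p → ℕ} {rk : Finset (Fin p) → ℕ} (hP : IsPolymatroid m rk)
    {i : Fin p} (hne : {v : Fin p → ℤ | inBase rk v ∧ 1 ≤ v i}.Nonempty) :
    ∀ (N : ℕ) (n : Fin p → ℤ), 1 ≤ n i →
      ((rk Finset.univ : ℤ) - ∑ k, n k).toNat ≤ N →
      mobius (rkOf {v : Fin p → ℤ | inBase rk v ∧ 1 ≤ v i}) n = mobius rk n := by
  set S := {v : Fin p → ℤ | inBase rk v ∧ 1 ≤ v i} with hSdef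
  intro N
  induction N with
  | zero =>
    intro n hni hN
    rw [mobius, mobius]
    by_cases hI : inIndep rk n
    · rw [if_pos ((indep_iff hP hne hni).mpr hI), if_pos hI]
      by_cases hB : inBase rk n
      · rw [if_pos ((base_iff hP hne hni).mpr hB), if_pos hB]
      · exfalso
        have hlt : ∑ k, n k < (rk Finset.univ : ℤ) :=
          lt_of_le_of_ne (hI.2 _) (fun he => hB ⟨hI, he⟩)
        omega
    · rw [if_neg (fun h => hI ((indep_iff hP hne hni).mp h)), if_neg hI]
  | succ N ih =>
    intro n hni hN
    rw [mobius, mobius]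
    by_cases hI : inIndep rk n
    · rw [if_pos ((indep_iff hP hne hni).mpr hI), if_pos hI]
      by_cases hB : inBase rk n
      · rw [if_pos ((base_iff hP hne hni).mpr hB), if_pos hB]
      · rw [if_neg (fun h => hB ((base_iff hP hne hni).mp h)), if_neg hB]
        have hlt : ∑ k, n k < (rk Finset.univ : ℤ) :=
          lt_of_le_of_ne (hI.2 _) (fun he => hB ⟨hI, he⟩)
        congr 1
        have hFeq : (Finset.Icc (fun _ => (0 : ℤ)) (fun j => (rkOf S {j} : ℤ))).filter
              (fun w => (∀ k, n k < w k) ∧ (∑ k, n k) < (∑ k, w k) ∧ inIndep (rkOf S) w) =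
            (Finset.Icc (fun _ => (0 : ℤ)) (fun j => (rk {j} : ℤ))).filter
              (fun w => (∀ k, n k < w k) ∧ (∑ k, n k) < (∑ k, w k) ∧ inIndep rk w) := by
          ext w
          rw [mobius_mem_filter_iff n w, mobius_mem_filter_iff n w]
          constructor
          · rintro ⟨h1, h2, h3⟩
            have hwi : 1 ≤ w i := by have := h1 i; omega
            exact ⟨h1, h2, (indep_iff hP hne hwi).mp h3⟩
          · rintro ⟨h1, h2, h3⟩
            have hwi : 1 ≤ w i := by have := h1 i; omega
            exact ⟨h1, h2, (indep_iff hP hne hwi).mpr h3⟩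
        rw [hFeq]
        rw [Finset.sum_attach _ (fun w => mobius (rkOf S) w),
          Finset.sum_attach _ (fun w => mobius rk w)]
        refine Finset.sum_congr rfl (fun w hw => ?_)
        obtain ⟨h1, h2, h3⟩ := (mobius_mem_filter_iff n w).mp hw
        have hwi : 1 ≤ w i := by have := h1 i; omega
        have hwle : ∑ k, w k ≤ (rk Finset.univ : ℤ) := h3.2 Finset.univ
        exact ih w hwi (by omega)
    · rw [if_neg (fun h => hI ((indep_iff hP hne hni).mp h)), if_neg hI]

/-- Let `𝒫` be a polymatroid on `[p]` with cage `m`, let `i ∈ [p]`,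
and suppose the truncation `𝒫_{e_i} = {n ∈ B(𝒫) ∩ ℕ^p : n_i ≥ 1}` is nonempty
(it is an M-convex set, hence a polymatroid, with rank function
`rk_S(J) = max_{u∈S} ∑_{j∈J} u_j`). Then for every `n ∈ ℕ^p` with `n ≥ e_i` one
has `μ_{𝒫_{e_i}}(n) = μ_𝒫(n)`. -/
theorem mobius_truncation_eq
    (p : ℕ) (hp : 1 ≤ p) (m : Fin p → ℕ) (rk : Finset (Fin p) → ℕ)
    (hP : IsPolymatroid m rk) (i : Fin p)
    (hne : {v : Fin p → ℤ | inBase rk v ∧ 1 ≤ v i}.Nonempty)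
    (n : Fin p → ℕ) (hn : 1 ≤ n i) :
    mobius (rkOf {v : Fin p → ℤ | inBase rk v ∧ 1 ≤ v i}) (fun k => (n k : ℤ)) =
      mobius rk (fun k => (n k : ℤ)) := by
  refine mobius_eq_aux hP hne ((rk Finset.univ : ℤ) - ∑ k, (n k : ℤ)).toNat
    (fun k => (n k : ℤ)) ?_ (le_refl _)
  have h1 : (1 : ℤ) ≤ (n i : ℤ) := by exact_mod_cast hn
  exact h1

end CavePaper
end

section
/- Let 𝒫 be a polymatroid on [p] with cage m ∈ ℕ^p, let i ∈ [p], and suppose 𝒫' = 𝒫 − e_i = {n − e_i : n ∈ B(𝒫)∩ℕ^p, n_i ≥ 1} and the truncation 𝒫_{e_i} = {n ∈ B(𝒫)∩ℕ^p : n_i ≥ 1} are nonempty (both are M-convex sets, hence polymatroids). Then for every n ∈ ℕ^p with n ≥ e_i one has μ_{𝒫_{e_i}}(n) = μ_{𝒫'}(n − e_i). -/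
open scoped BigOperators

attribute [local instance] Classical.propDecidable

namespace CavePaper

variable {p : ℕ}

-- auxiliary lemmas, appended after prefix
lemma indep_shift {p : ℕ} (i : Fin p) (rk1 rk2 : Finset (Fin p) → ℕ)
    (hA : ∀ J, rk1 J = rk2 J + (if i ∈ J then 1 else 0))
    (w : Fin p → ℤ) (hwi : 1 ≤ w i) :
    inIndep rk1 w ↔ inIndep rk2 (fun k => w k - (if k = i then 1 else 0)) := by
  have hsum : ∀ J : Finset (Fin p),
      ∑ j ∈ J, (w j - (if j = i then 1 else 0)) = (∑ j ∈ J, w j) - (if i ∈ J then 1 else 0) := by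
    intro J; rw [Finset.sum_sub_distrib]; simp [Finset.sum_ite_eq]
  constructor
  · rintro ⟨h0, hJ⟩
    refine ⟨fun j => ?_, fun J => ?_⟩
    · by_cases hj : j = i <;> simp [hj] <;> [exact hwi; exact h0 j]
    · rw [hsum J]
      have := hJ J
      have := hA J
      by_cases hij : i ∈ J <;> simp [hij] at * <;> omega
  · rintro ⟨h0, hJ⟩
    refine ⟨fun j => ?_, fun J => ?_⟩
    · have := h0 j
      by_cases hj : j = i
      · subst hj; simp only [if_pos rfl] at this; omega
      · simpa [hj] using this
    · have := hJ J
      rw [hsum J] at this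
      have := hA J
      by_cases hij : i ∈ J <;> simp [hij] at * <;> omega

lemma base_shift {p : ℕ} (i : Fin p) (rk1 rk2 : Finset (Fin p) → ℕ)
    (hA : ∀ J, rk1 J = rk2 J + (if i ∈ J then 1 else 0))
    (w : Fin p → ℤ) (hwi : 1 ≤ w i) :
    inBase rk1 w ↔ inBase rk2 (fun k => w k - (if k = i then 1 else 0)) := by
  have hsum : ∑ j : Fin p, (w j - (if j = i then 1 else 0)) = (∑ j : Fin p, w j) - 1 := by
    rw [Finset.sum_sub_distrib]; simp [Finset.sum_ite_eq]
  have hu := hA Finset.univ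
  simp only [Finset.mem_univ, if_true] at hu
  unfold inBase
  rw [indep_shift i rk1 rk2 hA w hwi, hsum]
  constructor
  · rintro ⟨h1, h2⟩; exact ⟨h1, by omega⟩
  · rintro ⟨h1, h2⟩; exact ⟨h1, by omega⟩

lemma mobius_shift {p : ℕ} (i : Fin p) (rk1 rk2 : Finset (Fin p) → ℕ)
    (hA : ∀ J, rk1 J = rk2 J + (if i ∈ J then 1 else 0)) :
    ∀ N : ℕ, ∀ n : Fin p → ℤ,
      ((rk1 Finset.univ : ℤ) - ∑ j, n j).toNat ≤ N → 1 ≤ n i →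
      mobius rk1 n = mobius rk2 (fun k => n k - (if k = i then 1 else 0)) := by
  intro N
  induction N using Nat.strong_induction_on with
  | _ N IH =>
    intro n hN hni
    rw [mobius, mobius]
    by_cases h1 : inIndep rk1 n
    · have h1' := (indep_shift i rk1 rk2 hA n hni).mp h1
      rw [if_pos h1, if_pos h1']
      by_cases h2 : inBase rk1 n
      · rw [if_pos h2, if_pos ((base_shift i rk1 rk2 hA n hni).mp h2)]
      · have h2' : ¬ inBase rk2 (fun k => n k - (if k = i then 1 else 0)) :=
          fun hb => h2 ((base_shift i rk1 rk2 hA n hni).mpr hb)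
        rw [if_neg h2, if_neg h2']
        congr 1
        rw [Finset.sum_attach, Finset.sum_attach]
        have hsumlt : ∑ j : Fin p, n j < (rk1 Finset.univ : ℤ) := by
          have := h1.2 Finset.univ
          have hne : ∑ j : Fin p, n j ≠ (rk1 Finset.univ : ℤ) := fun h => h2 ⟨h1, h⟩
          omega
        have hsub : ∀ (v : Fin p → ℤ),
            ∑ j : Fin p, (v j - (if j = i then 1 else 0)) = (∑ j : Fin p, v j) - 1 := by
          intro v; rw [Finset.sum_sub_distrib]; simp [Finset.sum_ite_eq]
        have hadd : ∀ (v : Fin p → ℤ),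
            ∑ j : Fin p, (v j + (if j = i then 1 else 0)) = (∑ j : Fin p, v j) + 1 := by
          intro v; rw [Finset.sum_add_distrib]; simp [Finset.sum_ite_eq]
        have hAj : ∀ j : Fin p, (rk1 {j} : ℤ) = rk2 {j} + (if j = i then 1 else 0) := by
          intro j
          have h := hA {j}
          by_cases hj : j = i
          · subst hj; simp at h ⊢; omega
          · have hij : i ∉ ({j} : Finset (Fin p)) := by
              simp only [Finset.mem_singleton]; exact fun h' => hj h'.symm
            rw [if_neg hij] at h
            rw [if_neg hj]; omega
        refine Finset.sum_bij'
          (i := fun w _ => fun k => w k - (if k = i then 1 else 0))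
          (j := fun w _ => fun k => w k + (if k = i then 1 else 0))
          ?_ ?_ ?_ ?_ ?_
        · -- maps into target filter
          intro w hw
          simp only [Finset.mem_filter, Finset.mem_Icc, Pi.le_def] at hw ⊢
          obtain ⟨⟨hlo, hhi⟩, hlt, hslt, hind⟩ := hw
          have hwi : 1 ≤ w i := le_trans hni (le_of_lt (hlt i))
          refine ⟨⟨fun j => ?_, fun j => ?_⟩, fun j => ?_, ?_, ?_⟩
          · have := hlo j
            by_cases hj : j = i
            · subst hj; simp only [if_pos rfl]; omega
            · simp only [if_neg hj]; omega
          · have h1 := hhi j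
            have h2 := hAj j
            by_cases hj : j = i
            · subst hj; simp only [if_pos rfl] at h2 ⊢; omega
            · simp only [if_neg hj] at h2 ⊢; omega
          · have := hlt j
            by_cases hj : j = i
            · subst hj; simp only [if_pos rfl]; omega
            · simp only [if_neg hj]; omega
          · rw [hsub n, hsub w]; omega
          · exact (indep_shift i rk1 rk2 hA w hwi).mp hind
        · intro w hw
          simp only [Finset.mem_filter, Finset.mem_Icc, Pi.le_def] at hw ⊢
          obtain ⟨⟨hlo, hhi⟩, hlt, hslt, hind⟩ := hw
          have hback : (fun k => (w k + (if k = i then 1 else 0)) - (if k = i then 1 else 0)) = w := by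
            funext k; ring
          refine ⟨⟨fun j => ?_, fun j => ?_⟩, fun j => ?_, ?_, ?_⟩
          · have := hlo j
            by_cases hj : j = i
            · subst hj; simp only [if_pos rfl]; omega
            · simp only [if_neg hj]; omega
          · have h1 := hhi j
            have h2 := hAj j
            by_cases hj : j = i
            · subst hj; simp only [if_pos rfl] at h2 ⊢; omega
            · simp only [if_neg hj] at h2 ⊢; omega
          · have := hlt j
            by_cases hj : j = i
            · subst hj; simp only [if_pos rfl] at this ⊢; omega
            · simp only [if_neg hj] at this ⊢; omega
          · rw [hsub n] at hslt
            rw [hadd w]; omega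
          · have h := (indep_shift i rk1 rk2 hA (fun k => w k + (if k = i then 1 else 0))
              (by simp; have := hlo i; omega)).mpr
            rw [hback] at h
            exact h hind
        · intro w hw; funext k; ring
        · intro w hw; funext k; ring
        · intro w hw
          simp only [Finset.mem_filter, Finset.mem_Icc, Pi.le_def] at hw
          obtain ⟨⟨hlo, hhi⟩, hlt, hslt, hind⟩ := hw
          have hwi : 1 ≤ w i := le_trans hni (le_of_lt (hlt i))
          have hwle : ∑ j : Fin p, w j ≤ (rk1 Finset.univ : ℤ) := by
            simpa using hind.2 Finset.univ
          have hmeas : ((rk1 Finset.univ : ℤ) - ∑ j, w j).toNat < N := by omega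
          exact IH _ hmeas w le_rfl hwi
    · have h1' : ¬ inIndep rk2 (fun k => n k - (if k = i then 1 else 0)) :=
        fun h => h1 ((indep_shift i rk1 rk2 hA n hni).mpr h)
      rw [if_neg h1, if_neg h1']

lemma rk_shift {p : ℕ} (rk : Finset (Fin p) → ℕ) (i : Fin p)
    (hne : {v : Fin p → ℤ | inBase rk v ∧ 1 ≤ v i}.Nonempty) (J : Finset (Fin p)) :
    rkOf {v : Fin p → ℤ | inBase rk v ∧ 1 ≤ v i} J
      = rkOf {v : Fin p → ℤ | (∀ j, 0 ≤ v j) ∧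
          inBase rk (fun k => v k + (if k = i then 1 else 0))} J
        + (if i ∈ J then 1 else 0) := by
  set S1 : Set (Fin p → ℤ) := {v | inBase rk v ∧ 1 ≤ v i} with hS1
  set S2 : Set (Fin p → ℤ) := {v | (∀ j, 0 ≤ v j) ∧
      inBase rk (fun k => v k + (if k = i then 1 else 0))} with hS2
  set c : ℕ := if i ∈ J then 1 else 0 with hc
  have hsub : ∀ (v : Fin p → ℤ),
      ∑ j ∈ J, (v j - (if j = i then 1 else 0)) = (∑ j ∈ J, v j) - (c : ℤ) := by
    intro v; rw [Finset.sum_sub_distrib]; simp [Finset.sum_ite_eq, hc]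
  -- forward: shift of S1 elements lies in S2
  have hfwd : ∀ v ∈ S1, (fun k => v k - (if k = i then 1 else 0)) ∈ S2 := by
    intro v hv
    obtain ⟨hb, hvi⟩ := hv
    have h0 : ∀ j, 0 ≤ v j := hb.1.1
    constructor
    · intro j
      by_cases hj : j = i
      · subst hj; simp; omega
      · simp only [if_neg hj]; have := h0 j; omega
    · have : (fun k => (v k - (if k = i then 1 else 0)) + (if k = i then 1 else 0)) = v := by
        funext k; ring
      rw [this]; exact hb
  have hbwd : ∀ v ∈ S2, (fun k => v k + (if k = i then 1 else 0)) ∈ S1 := by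
    intro v hv
    obtain ⟨h0, hb⟩ := hv
    exact ⟨hb, by simp; have := h0 i; omega⟩
  -- bounds on sums of S1 elements
  have hS1sum : ∀ v ∈ S1, (c : ℤ) ≤ ∑ j ∈ J, v j ∧ ∑ j ∈ J, v j ≤ (rk J : ℤ) := by
    intro v hv
    obtain ⟨hb, hvi⟩ := hv
    constructor
    · by_cases hij : i ∈ J
      · have := Finset.single_le_sum (f := v) (fun j _ => hb.1.1 j) hij
        simp [hc, hij]; omega
      · have : 0 ≤ ∑ j ∈ J, v j := Finset.sum_nonneg (fun j _ => hb.1.1 j)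
        simp [hc, hij]; omega
    · exact hb.1.2 J
  have hS2sum : ∀ v ∈ S2, ∑ j ∈ J, v j ≤ (rk J : ℤ) - c := by
    intro v hv
    have h1 := hS1sum _ (hbwd v hv)
    have h2 : ∑ j ∈ J, (v j + (if j = i then 1 else 0)) = (∑ j ∈ J, v j) + (c : ℤ) := by
      rw [Finset.sum_add_distrib]; simp [Finset.sum_ite_eq, hc]
    rw [h2] at h1
    omega
  unfold rkOf
  set A := ((fun u => (∑ j ∈ J, u j).toNat) '' S1) with hA
  set A' := ((fun u => (∑ j ∈ J, u j).toNat) '' S2) with hA'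
  have hAne : A.Nonempty := hne.image _
  have hA'ne : A'.Nonempty := (hne.image _).mono (by
    rintro _ ⟨v, hv, rfl⟩
    exact ⟨_, hfwd v hv, rfl⟩)
  have hAbdd : BddAbove A := by
    refine ⟨rk J, ?_⟩
    rintro _ ⟨v, hv, rfl⟩
    have := (hS1sum v hv).2
    simp; omega
  have hA'bdd : BddAbove A' := by
    refine ⟨rk J, ?_⟩
    rintro _ ⟨v, hv, rfl⟩
    have := hS2sum v hv
    simp; omega
  have hle1 : sSup A ≤ sSup A' + c := by
    apply csSup_le hAne
    rintro _ ⟨v, hv, rfl⟩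
    have h1 := hS1sum v hv
    have h2 : ((∑ j ∈ J, v j) - (c : ℤ)).toNat ∈ A' := by
      refine ⟨_, hfwd v hv, ?_⟩
      show (∑ j ∈ J, (v j - (if j = i then 1 else 0))).toNat = _
      rw [hsub v]
    have h3 := le_csSup hA'bdd h2
    show (∑ j ∈ J, v j).toNat ≤ sSup A' + c
    omega
  have hle2 : ∀ a' ∈ A', a' + c ≤ sSup A := by
    rintro _ ⟨v, hv, rfl⟩
    have h4 : ∑ j ∈ J, (v j + (if j = i then 1 else 0)) = (∑ j ∈ J, v j) + (c : ℤ) := by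
      rw [Finset.sum_add_distrib]; simp [Finset.sum_ite_eq, hc]
    have h2 : ((∑ j ∈ J, v j) + (c : ℤ)).toNat ∈ A := by
      refine ⟨_, hbwd v hv, ?_⟩
      show (∑ j ∈ J, (v j + (if j = i then 1 else 0))).toNat = _
      rw [h4]
    have h3 := le_csSup hAbdd h2
    have h0 : 0 ≤ ∑ j ∈ J, v j := Finset.sum_nonneg (fun j _ => hv.1 j)
    show (∑ j ∈ J, v j).toNat + c ≤ sSup A
    omega
  have hcle : c ≤ sSup A := by
    obtain ⟨a', ha'⟩ := hA'ne
    have := hle2 a' ha'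
    omega
  have hle2' : sSup A' ≤ sSup A - c := by
    apply csSup_le hA'ne
    intro a' ha'
    have := hle2 a' ha'
    omega
  omega
/-- Let `𝒫` be a polymatroid on `[p]` with cage `m`, let `i ∈ [p]`,
and suppose `𝒫' = 𝒫 - e_i = {n - e_i : n ∈ B(𝒫) ∩ ℕ^p, n_i ≥ 1}` and the truncation
`𝒫_{e_i} = {n ∈ B(𝒫) ∩ ℕ^p : n_i ≥ 1}` are nonempty (both M-convex, hence
polymatroids, with rank functions `rk_S(J) = max_{u∈S} ∑_{j∈J} u_j`). Then for
every `n ∈ ℕ^p` with `n ≥ e_i` one has `μ_{𝒫_{e_i}}(n) = μ_{𝒫'}(n - e_i)`. -/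
theorem mobius_truncation_eq_shift
    (p : ℕ) (hp : 1 ≤ p) (m : Fin p → ℕ) (rk : Finset (Fin p) → ℕ)
    (hP : IsPolymatroid m rk) (i : Fin p)
    (hne : {v : Fin p → ℤ | inBase rk v ∧ 1 ≤ v i}.Nonempty)
    (hne' : {v : Fin p → ℤ | (∀ j, 0 ≤ v j) ∧
      inBase rk (fun k => v k + (if k = i then 1 else 0))}.Nonempty)
    (n : Fin p → ℕ) (hn : 1 ≤ n i) :
    mobius (rkOf {v : Fin p → ℤ | inBase rk v ∧ 1 ≤ v i}) (fun k => (n k : ℤ)) =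
      mobius (rkOf {v : Fin p → ℤ | (∀ j, 0 ≤ v j) ∧
          inBase rk (fun k => v k + (if k = i then 1 else 0))})
        (fun k => (n k : ℤ) - (if k = i then 1 else 0)) := by
  have hA := rk_shift rk i hne
  exact mobius_shift i _ _ hA _ (fun k => (n k : ℤ)) le_rfl (by simp; exact_mod_cast hn)

end CavePaper
end

section
/- Let 𝒫 be a polymatroid on [p] with cage m ∈ ℕ^p and let b ∈ ℕ^p be such that 𝒫 − b = {n − b : n ∈ B(𝒫)∩ℕ^p, n ≥ b} is nonempty (it is an M-convex set, hence a polymatroid). Then for every n ∈ ℕ^p with n ≥ b one has μ_𝒫(n) = μ_{𝒫 − b}(n − b). -/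
open scoped BigOperators

attribute [local instance] Classical.propDecidable

namespace CavePaper

variable {p : ℕ}

/-! For `n ≥ b`, the point `n` is independent (resp. a base point) of `𝒫` exactly when `n - b`
is one of `𝒫 - b`. The nontrivial direction extends an independent `n` to a base point `w ≥ n`:
by submodularity the sets on which `n` is tight are closed under union, so an independent point
that is not a base point can be raised in some coordinate. Then `w - b ∈ 𝒫 - b` bounds `n - b`.
Hence translation by `b` matches the points entering the recursions for `μ_𝒫(n)` and
`μ_{𝒫 - b}(n - b)`, and the two Möbius functions agree by induction on `rk(𝒫) - |n|`. -/

section Augmentation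

variable {rk : Finset (Fin p) → ℕ}

lemma inIndep.sum_univ_le {n : Fin p → ℤ} (hn : inIndep rk n) :
    ∑ i, n i ≤ rk Finset.univ :=
  hn.2 Finset.univ

lemma inIndep.sum_union_eq_of_tight {n : Fin p → ℤ}
    (hsub : ∀ J₁ J₂ : Finset (Fin p), rk (J₁ ∩ J₂) + rk (J₁ ∪ J₂) ≤ rk J₁ + rk J₂)
    (hn : inIndep rk n) {A B : Finset (Fin p)}
    (hA : ∑ j ∈ A, n j = rk A) (hB : ∑ j ∈ B, n j = rk B) :
    ∑ j ∈ A ∪ B, n j = rk (A ∪ B) := by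
  have hsum := Finset.sum_union_inter (s₁ := A) (s₂ := B) (f := n)
  have hrk : ((rk (A ∩ B) + rk (A ∪ B) : ℕ) : ℤ) ≤ (rk A + rk B : ℕ) := by
    exact_mod_cast hsub A B
  have := hn.2 (A ∩ B)
  have := hn.2 (A ∪ B)
  push_cast at hrk
  omega

lemma inIndep.exists_tight_mem {n : Fin p → ℤ} (hn : inIndep rk n) {i : Fin p}
    (hi : ¬ inIndep rk (n + Pi.single i 1)) : ∃ J, i ∈ J ∧ ∑ j ∈ J, n j = rk J := by
  have hsingle : (0 : Fin p → ℤ) ≤ Pi.single i 1 := Pi.single_nonneg.mpr zero_le_one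
  have hnonneg : ∀ k, 0 ≤ (n + Pi.single i 1 : Fin p → ℤ) k := fun k =>
    add_nonneg (hn.1 k) (hsingle k)
  obtain ⟨J, hJ⟩ : ∃ J, (rk J : ℤ) < ∑ j ∈ J, (n + Pi.single i 1 : Fin p → ℤ) j := by
    simp only [inIndep, not_and, not_forall, not_le] at hi
    exact hi hnonneg
  have := hn.2 J
  by_cases hiJ : i ∈ J
  · simp only [Pi.add_apply, Finset.sum_add_distrib, Finset.sum_pi_single', if_pos hiJ] at hJ
    exact ⟨J, hiJ, by omega⟩
  · simp only [Pi.add_apply, Finset.sum_add_distrib, Finset.sum_pi_single', if_neg hiJ] at hJ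
    omega

variable (h0 : rk ∅ = 0)
  (hsub : ∀ J₁ J₂ : Finset (Fin p), rk (J₁ ∩ J₂) + rk (J₁ ∪ J₂) ≤ rk J₁ + rk J₂)
include h0 hsub

lemma inIndep.exists_inIndep_add_single {n : Fin p → ℤ} (hn : inIndep rk n)
    (hlt : ∑ i, n i < rk Finset.univ) : ∃ i, inIndep rk (n + Pi.single i 1) := by
  by_contra! hcon
  choose T hiT hT using fun i => hn.exists_tight_mem (hcon i)
  have htight : ∀ s : Finset (Fin p), ∑ j ∈ s.sup T, n j = rk (s.sup T) := by
    intro s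
    induction s using Finset.induction_on with
    | empty => simp [h0]
    | insert a s _ ih =>
      rw [Finset.sup_insert, Finset.sup_eq_union]
      exact hn.sum_union_eq_of_tight hsub (hT a) ih
  have huniv : Finset.univ.sup T = Finset.univ :=
    Finset.eq_univ_of_forall fun i => Finset.le_sup (f := T) (Finset.mem_univ i) (hiT i)
  have := htight Finset.univ
  rw [huniv] at this
  omega

theorem inIndep.exists_inBase_ge {n : Fin p → ℤ} (hn : inIndep rk n) :
    ∃ w, inBase rk w ∧ n ≤ w := by
  by_cases hB : ∑ i, n i = rk Finset.univ
  · exact ⟨n, ⟨hn, hB⟩, le_rfl⟩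
  obtain ⟨i, hi⟩ := hn.exists_inIndep_add_single h0 hsub (lt_of_le_of_ne hn.sum_univ_le hB)
  obtain ⟨w, hw, hle⟩ := hi.exists_inBase_ge
  exact ⟨w, hw, le_trans (le_add_of_nonneg_right (Pi.single_nonneg.mpr zero_le_one)) hle⟩
termination_by ((rk Finset.univ : ℤ) - ∑ i, n i).toNat
decreasing_by
  have := hi.sum_univ_le
  simp only [Pi.add_apply, Finset.sum_add_distrib, Finset.sum_pi_single',
    if_pos (Finset.mem_univ i)] at this ⊢
  omega

end Augmentation

noncomputable def indepAbove (rk : Finset (Fin p) → ℕ) (n : Fin p → ℤ) : Finset (Fin p → ℤ) :=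
  (Finset.Icc (fun _ => (0 : ℤ)) (fun i => (rk {i} : ℤ))).filter
    (fun w => (∀ i, n i < w i) ∧ (∑ i, n i) < (∑ i, w i) ∧ inIndep rk w)

section Recursion

variable {rk : Finset (Fin p) → ℕ} {n : Fin p → ℤ}

lemma mem_indepAbove {w : Fin p → ℤ} :
    w ∈ indepAbove rk n ↔ (∀ i, n i < w i) ∧ (∑ i, n i) < (∑ i, w i) ∧ inIndep rk w := by
  refine ⟨fun hw => (Finset.mem_filter.mp hw).2, fun hw => Finset.mem_filter.mpr ⟨?_, hw⟩⟩
  refine Finset.mem_Icc.mpr ⟨fun i => hw.2.2.1 i, fun i => ?_⟩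
  simpa using hw.2.2.2 {i}

lemma mobius_of_not_inIndep (hn : ¬ inIndep rk n) : mobius rk n = 0 := by
  rw [mobius, if_neg hn]

lemma mobius_of_inBase (hn : inBase rk n) : mobius rk n = 1 := by
  rw [mobius, if_pos hn.1, if_pos hn]

lemma mobius_of_inIndep_of_not_inBase (hI : inIndep rk n) (hB : ¬ inBase rk n) :
    mobius rk n = 1 - ∑ w ∈ indepAbove rk n, mobius rk w := by
  rw [mobius, if_pos hI, if_neg hB, indepAbove, Finset.sum_attach _ (mobius rk)]

end Recursion

theorem mobius_eq_mobius_sub {rk rk' : Finset (Fin p) → ℕ} {b : Fin p → ℤ}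
    (hI : ∀ n, b ≤ n → (inIndep rk n ↔ inIndep rk' (n - b)))
    (hB : ∀ n, b ≤ n → (inBase rk n ↔ inBase rk' (n - b)))
    (n : Fin p → ℤ) (hbn : b ≤ n) : mobius rk n = mobius rk' (n - b) := by
  by_cases hn : inIndep rk n
  swap
  · rw [mobius_of_not_inIndep hn, mobius_of_not_inIndep ((hI n hbn).not.mp hn)]
  by_cases hnB : inBase rk n
  · rw [mobius_of_inBase hnB, mobius_of_inBase ((hB n hbn).mp hnB)]
  rw [mobius_of_inIndep_of_not_inBase hn hnB,
    mobius_of_inIndep_of_not_inBase ((hI n hbn).mp hn) ((hB n hbn).not.mp hnB)]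
  have hb_le : ∀ {w}, (∀ i, n i < w i) → b ≤ w := fun hw i => (hbn i).trans (hw i).le
  congr 1
  refine Finset.sum_nbij' (· - b) (· + b) (fun w hw => ?_) (fun u hu => ?_)
    (fun w _ => sub_add_cancel w b) (fun u _ => add_sub_cancel_right u b) (fun w hw => ?_)
  · obtain ⟨hlt, hsum, hw⟩ := mem_indepAbove.mp hw
    refine mem_indepAbove.mpr ⟨fun i => ?_, ?_, (hI w (hb_le hlt)).mp hw⟩
    · simpa using hlt i
    · simpa [Finset.sum_sub_distrib] using hsum
  · obtain ⟨hlt, hsum, hu⟩ := mem_indepAbove.mp hu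
    have hnu : ∀ i, n i < (u + b) i := fun i => sub_lt_iff_lt_add.mp (hlt i)
    refine mem_indepAbove.mpr ⟨hnu, ?_, ?_⟩
    · simp only [Pi.sub_apply, Pi.add_apply, Finset.sum_sub_distrib,
        Finset.sum_add_distrib] at hsum ⊢
      linarith
    · exact (hI (u + b) (hb_le hnu)).mpr (by rwa [add_sub_cancel_right])
  · exact mobius_eq_mobius_sub hI hB w (hb_le (mem_indepAbove.mp hw).1)
termination_by ((rk Finset.univ : ℤ) - ∑ i, n i).toNat
decreasing_by
  obtain ⟨-, hsum, hw⟩ := mem_indepAbove.mp ‹w ∈ indepAbove rk n›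
  have := hw.sum_univ_le
  omega

section Translate

variable {S : Set (Fin p → ℤ)} {J : Finset (Fin p)} {c : ℤ}

lemma sum_le_rkOf (hc : ∀ u ∈ S, ∑ j ∈ J, u j ≤ c) {v : Fin p → ℤ} (hv : v ∈ S) :
    ∑ j ∈ J, v j ≤ rkOf S J := by
  have hbdd : BddAbove ((fun u => (∑ j ∈ J, u j).toNat) '' S) :=
    ⟨c.toNat, Set.forall_mem_image.mpr fun u hu => Int.toNat_le_toNat (hc u hu)⟩
  have := le_csSup hbdd (Set.mem_image_of_mem _ hv)
  exact (Int.self_le_toNat _).trans (by exact_mod_cast this)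

lemma rkOf_le_s10 (hc0 : 0 ≤ c) (hc : ∀ u ∈ S, ∑ j ∈ J, u j ≤ c) : (rkOf S J : ℤ) ≤ c := by
  have : rkOf S J ≤ c.toNat :=
    csSup_le' (Set.forall_mem_image.mpr fun u hu => Int.toNat_le_toNat (hc u hu))
  omega

/-- The lattice points of `𝒫 - b`. -/
def baseShift (rk : Finset (Fin p) → ℕ) (b : Fin p → ℤ) : Set (Fin p → ℤ) :=
  {v | (∀ j, 0 ≤ v j) ∧ inBase rk (v + b)}

variable {rk : Finset (Fin p) → ℕ} {b v : Fin p → ℤ}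

lemma sum_le_of_mem_baseShift (hv : v ∈ baseShift rk b) (J : Finset (Fin p)) :
    ∑ j ∈ J, v j ≤ rk J - ∑ j ∈ J, b j := by
  have := hv.2.1.2 J
  simp only [Pi.add_apply, Finset.sum_add_distrib] at this
  linarith

lemma sum_univ_eq_of_mem_baseShift (hv : v ∈ baseShift rk b) :
    ∑ j, v j = rk Finset.univ - ∑ j, b j := by
  have := hv.2.2
  simp only [Pi.add_apply, Finset.sum_add_distrib] at this
  linarith

lemma rkOf_baseShift_le (hne : (baseShift rk b).Nonempty) (J : Finset (Fin p)) :
    (rkOf (baseShift rk b) J : ℤ) ≤ rk J - ∑ j ∈ J, b j := by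
  obtain ⟨v, hv⟩ := hne
  exact rkOf_le_s10 ((Finset.sum_nonneg fun j _ => hv.1 j).trans (sum_le_of_mem_baseShift hv J))
    fun u hu => sum_le_of_mem_baseShift hu J

lemma rkOf_baseShift_univ (hne : (baseShift rk b).Nonempty) :
    (rkOf (baseShift rk b) Finset.univ : ℤ) = rk Finset.univ - ∑ j, b j := by
  obtain ⟨v, hv⟩ := hne
  refine le_antisymm (rkOf_baseShift_le ⟨v, hv⟩ _) ?_
  rw [← sum_univ_eq_of_mem_baseShift hv]
  exact sum_le_rkOf (fun u hu => sum_le_of_mem_baseShift hu _) hv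

variable (h0 : rk ∅ = 0)
  (hsub : ∀ J₁ J₂ : Finset (Fin p), rk (J₁ ∩ J₂) + rk (J₁ ∪ J₂) ≤ rk J₁ + rk J₂)
  (hb : 0 ≤ b) (hne : (baseShift rk b).Nonempty)
include h0 hsub hb hne

lemma inIndep_iff_inIndep_rkOf_baseShift {n : Fin p → ℤ} (hbn : b ≤ n) :
    inIndep rk n ↔ inIndep (rkOf (baseShift rk b)) (n - b) := by
  constructor
  · intro hn
    obtain ⟨w, hw, hnw⟩ := hn.exists_inBase_ge h0 hsub
    have hwb : w - b ∈ baseShift rk b :=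
      ⟨fun j => sub_nonneg.mpr ((hbn j).trans (hnw j)), by rwa [sub_add_cancel]⟩
    refine ⟨fun j => sub_nonneg.mpr (hbn j), fun J => ?_⟩
    calc ∑ j ∈ J, (n - b) j ≤ ∑ j ∈ J, (w - b) j :=
          Finset.sum_le_sum fun j _ => sub_le_sub_right (hnw j) _
      _ ≤ rkOf (baseShift rk b) J := sum_le_rkOf (fun u hu => sum_le_of_mem_baseShift hu J) hwb
  · intro hn
    refine ⟨fun j => (hb j).trans (hbn j), fun J => ?_⟩
    have h1 := hn.2 J
    have h2 := rkOf_baseShift_le hne J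
    simp only [Pi.sub_apply, Finset.sum_sub_distrib] at h1
    linarith

lemma inBase_iff_inBase_rkOf_baseShift {n : Fin p → ℤ} (hbn : b ≤ n) :
    inBase rk n ↔ inBase (rkOf (baseShift rk b)) (n - b) := by
  rw [inBase, inBase, inIndep_iff_inIndep_rkOf_baseShift h0 hsub hb hne hbn,
    rkOf_baseShift_univ hne]
  simp only [Pi.sub_apply, Finset.sum_sub_distrib, sub_left_inj]

end Translate

theorem mobius_translate_restrict_general
    (p : ℕ) (m : Fin p → ℕ) (rk : Finset (Fin p) → ℕ)
    (hP : IsPolymatroid m rk) (b : Fin p → ℕ)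
    (hne : {v : Fin p → ℤ | (∀ j, 0 ≤ v j) ∧
      inBase rk (fun k => v k + (b k : ℤ))}.Nonempty)
    (n : Fin p → ℕ) (hn : ∀ j, b j ≤ n j) :
    mobius rk (fun k => (n k : ℤ)) =
      mobius (rkOf {v : Fin p → ℤ | (∀ j, 0 ≤ v j) ∧
          inBase rk (fun k => v k + (b k : ℤ))})
        (fun k => (n k : ℤ) - (b k : ℤ)) := by
  have hb : (0 : Fin p → ℤ) ≤ fun k => (b k : ℤ) := fun k => Int.natCast_nonneg (b k)
  exact mobius_eq_mobius_sub
    (fun _ hbn => inIndep_iff_inIndep_rkOf_baseShift hP.1 hP.2.2.1 hb hne hbn)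
    (fun _ hbn => inBase_iff_inBase_rkOf_baseShift hP.1 hP.2.2.1 hb hne hbn)
    _ fun j => Int.ofNat_le.mpr (hn j)

/-- Let `𝒫` be a polymatroid on `[p]` with cage `m` and let
`b ∈ ℕ^p` be such that `𝒫 - b = {n - b : n ∈ B(𝒫) ∩ ℕ^p, n ≥ b}` is nonempty
(it is an M-convex set, hence a polymatroid, with rank function
`rk_S(J) = max_{u∈S} ∑_{j∈J} u_j`). Then for every `n ∈ ℕ^p` with `n ≥ b` one has
`μ_𝒫(n) = μ_{𝒫 - b}(n - b)`. -/
theorem mobius_translate_restrict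
    (p : ℕ) (hp : 1 ≤ p) (m : Fin p → ℕ) (rk : Finset (Fin p) → ℕ)
    (hP : IsPolymatroid m rk) (b : Fin p → ℕ)
    (hne : {v : Fin p → ℤ | (∀ j, 0 ≤ v j) ∧
      inBase rk (fun k => v k + (b k : ℤ))}.Nonempty)
    (n : Fin p → ℕ) (hn : ∀ j, b j ≤ n j) :
    mobius rk (fun k => (n k : ℤ)) =
      mobius (rkOf {v : Fin p → ℤ | (∀ j, 0 ≤ v j) ∧
          inBase rk (fun k => v k + (b k : ℤ))})
        (fun k => (n k : ℤ) - (b k : ℤ)) :=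
  mobius_translate_restrict_general p m rk hP b hne n hn

end CavePaper
end
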